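/- Let A > 0, M ≥ 0, and let x : [t₀, T] → ℝ be a continuous, positive, differentiable function with x(t₀) ≤ M and x'(t) ≤ A·max(M, sup_{s ∈ [t₀, t]} x(s)) for all t ∈ [t₀, T]. Then x(t) ≤ M·e^{A(t - t₀)} for all t ∈ [t₀, T]. -/

import Mathlib

/-!
For every `M' > M` compare `x` with `B(s) = M' e^{A(s - t₀)}`, which solves `B' = A B` and
starts strictly above `x`. Before the first time `c` at which `x` reaches `B`, the running
maximum of `x` stays below the increasing function `B`, so the hypothesis gives `x' ≤ A B = B'`
on `[t₀, c)`; hence `B - x` cannot decrease there and stays at least `M' - x t₀ > 0`,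
contradicting `x c ≥ B c`. Letting `M' ↓ M` gives the bound.
-/

open Set Filter Topology Real

theorem exists_first_le_of_continuousOn {f g : ℝ → ℝ} {a t : ℝ}
    (hf : ContinuousOn f (Icc a t)) (hg : ContinuousOn g (Icc a t)) (hat : a ≤ t)
    (hgf : g t ≤ f t) : ∃ c ∈ Icc a t, g c ≤ f c ∧ ∀ s ∈ Ico a c, f s < g s := by
  set S := {s ∈ Icc a t | g s ≤ f s}
  have hS : IsClosed S := isClosed_Icc.isClosed_le hg hf
  have hSne : S.Nonempty := ⟨t, ⟨hat, le_rfl⟩, hgf⟩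
  have hSbdd : BddBelow S := ⟨a, fun s hs => hs.1.1⟩
  obtain ⟨hcmem, hc⟩ := hS.csInf_mem hSne hSbdd
  refine ⟨sInf S, hcmem, hc, fun s hs => ?_⟩
  by_contra! hfg
  exact (csInf_le hSbdd ⟨⟨hs.1, hs.2.le.trans hcmem.2⟩, hfg⟩).not_gt hs.2

theorem hasDerivAt_const_mul_exp_mul_sub (C A t₀ s : ℝ) :
    HasDerivAt (fun s => C * exp (A * (s - t₀))) (A * (C * exp (A * (s - t₀)))) s :=
  ((((hasDerivAt_id' s).sub_const t₀).const_mul A).exp.const_mul C).congr_deriv (by ring)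

theorem monotone_const_mul_exp_mul_sub {C A : ℝ} (hC : 0 ≤ C) (hA : 0 ≤ A) (t₀ : ℝ) :
    Monotone fun s => C * exp (A * (s - t₀)) := fun _ _ hst => by
  dsimp only
  gcongr

theorem lt_mul_exp_of_deriv_le_mul_max_sSup {A M M' t₀ T : ℝ} {x x' : ℝ → ℝ}
    (hA : 0 ≤ A) (hM : 0 ≤ M) (hMM' : M ≤ M') (hx0 : x t₀ < M')
    (hcont : ContinuousOn x (Icc t₀ T))
    (hderiv : ∀ t ∈ Icc t₀ T, HasDerivAt x (x' t) t)
    (hineq : ∀ t ∈ Icc t₀ T, x' t ≤ A * max M (sSup (x '' Icc t₀ t))) :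
    ∀ t ∈ Icc t₀ T, x t < M' * exp (A * (t - t₀)) := by
  intro t ht
  set B : ℝ → ℝ := fun s => M' * exp (A * (s - t₀))
  have hB' : ∀ s, HasDerivAt B (A * B s) s := hasDerivAt_const_mul_exp_mul_sub M' A t₀
  have hBmono : Monotone B := monotone_const_mul_exp_mul_sub (hM.trans hMM') hA t₀
  by_contra! hBx
  obtain ⟨c, hc, hBxc, hbefore⟩ := exists_first_le_of_continuousOn
    (hcont.mono (Icc_subset_Icc_right ht.2)) (fun s _ => (hB' s).continuousAt.continuousWithinAt)
    ht.1 hBx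
  have hcT : Icc t₀ c ⊆ Icc t₀ T := Icc_subset_Icc_right (hc.2.trans ht.2)
  have hx'_le : ∀ s ∈ Ico t₀ c, x' s ≤ A * B s := by
    intro s hs
    have hMB : M ≤ B s := by
      calc M ≤ B t₀ := by simp [B, hMM']
        _ ≤ B s := hBmono hs.1
    have hsup : sSup (x '' Icc t₀ s) ≤ B s := by
      refine csSup_le ((nonempty_Icc.2 hs.1).image x) ?_
      rintro _ ⟨u, hu, rfl⟩
      exact (hbefore u ⟨hu.1, hu.2.trans_lt hs.2⟩).le.trans (hBmono hu.2)
    exact (hineq s (hcT (Ico_subset_Icc_self hs))).trans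
      (mul_le_mul_of_nonneg_left (max_le hMB hsup) hA)
  -- shifting `x` up by `M' - x t₀` makes it start on `B`
  have hcomp := image_le_of_deriv_right_le_deriv_boundary (a := t₀) (b := c)
    (f := fun s => x s + (M' - x t₀)) (hcont.mono hcT |>.add continuousOn_const)
    (fun s hs => ((hderiv s (hcT (Ico_subset_Icc_self hs))).add_const _).hasDerivWithinAt)
    (by simp [B]) (fun s _ => (hB' s).continuousAt.continuousWithinAt)
    (fun s _ => (hB' s).hasDerivWithinAt) hx'_le ⟨hc.1, le_rfl⟩
  linarith

theorem stmt_9_general (A M t₀ T : ℝ) (hA : 0 < A) (hM : 0 ≤ M) (x x' : ℝ → ℝ)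
    (hcont : ContinuousOn x (Set.Icc t₀ T))
    (hx0 : x t₀ ≤ M)
    (hderiv : ∀ t ∈ Set.Icc t₀ T, HasDerivAt x (x' t) t)
    (hineq : ∀ t ∈ Set.Icc t₀ T, x' t ≤ A * max M (sSup (x '' Set.Icc t₀ t))) :
    ∀ t ∈ Set.Icc t₀ T, x t ≤ M * Real.exp (A * (t - t₀)) := by
  intro t ht
  have hlim : Tendsto (fun M' => M' * exp (A * (t - t₀))) (𝓝[>] M) (𝓝 (M * exp (A * (t - t₀)))) :=
    ((continuous_id.mul continuous_const).tendsto M).mono_left nhdsWithin_le_nhds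
  refine ge_of_tendsto hlim (eventually_nhdsWithin_of_forall fun M' hM' => ?_)
  exact (lt_mul_exp_of_deriv_le_mul_max_sSup hA.le hM (le_of_lt hM') (hx0.trans_lt hM')
    hcont hderiv hineq t ht).le

theorem stmt_9 (A M t₀ T : ℝ) (hA : 0 < A) (hM : 0 ≤ M) (x x' : ℝ → ℝ)
    (hcont : ContinuousOn x (Set.Icc t₀ T))
    (hpos : ∀ t ∈ Set.Icc t₀ T, 0 < x t)
    (hx0 : x t₀ ≤ M)
    (hderiv : ∀ t ∈ Set.Icc t₀ T, HasDerivAt x (x' t) t)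
    (hineq : ∀ t ∈ Set.Icc t₀ T, x' t ≤ A * max M (sSup (x '' Set.Icc t₀ t))) :
    ∀ t ∈ Set.Icc t₀ T, x t ≤ M * Real.exp (A * (t - t₀)) :=
  stmt_9_general A M t₀ T hA hM x x' hcont hx0 hderiv hineq
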